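/- Let X be a Köthe reflexive F^n-directional Banach function space over Ω and E a set of finite positive measure. Suppose 1_E u ∈ X and 1_E u ∈ X' for all u ∈ F^n, and let A_{X,E}, A_{X',E} be reducing matrices, i.e., Hermitian positive definite matrices with |A_{X,E}u| ≤ ‖1_E u‖_X ≤ n^{1/2}|A_{X,E}u| and similarly for X'. Then ‖T_E‖_{X→X} is comparable (up to constants depending only on n) to μ(E)^{-1}‖A_{X,E} A_{X',E}‖, the operator norm of the product matrix. -/

import Mathlib

open MeasureTheory ENNReal
open scoped ComplexOrder

/-- The Köthe dual (extended-valued) norm of an `𝔽ⁿ`-directional Banach function space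
encoded by its extended norm `eN`. -/
noncomputable def dirDualNorm {𝕜 : Type*} [RCLike 𝕜] {n : ℕ}
    [MeasurableSpace (EuclideanSpace 𝕜 (Fin n))]
    {Ω : Type*} [MeasurableSpace Ω]
    (μ : Measure Ω) (eN : (Ω → EuclideanSpace 𝕜 (Fin n)) → ℝ≥0∞)
    (g : Ω → EuclideanSpace 𝕜 (Fin n)) : ℝ≥0∞ :=
  ⨆ f ∈ {f : Ω → EuclideanSpace 𝕜 (Fin n) | Measurable f ∧ eN f ≤ 1},
    ∫⁻ x, (‖(inner 𝕜 (f x) (g x) : 𝕜)‖₊ : ℝ≥0∞) ∂μ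

/-- The averaging operator `T_E f := (⨍_E f dμ) 1_E`. -/
noncomputable def avgOp {𝕜 : Type*} [RCLike 𝕜] {n : ℕ} {Ω : Type*} [MeasurableSpace Ω]
    (μ : Measure Ω) (E : Set Ω) (f : Ω → EuclideanSpace 𝕜 (Fin n)) :
    Ω → EuclideanSpace 𝕜 (Fin n) :=
  E.indicator fun _ => ⨍ x in E, f x ∂μ

/-!
Write `a`, `b` for the operators of `A`, `B`. Hölder's inequality for the pair `X`, `X'` gives
`|⟪v, ∫_E f⟫| ≤ ‖f‖_X ‖1_E v‖_{X'} ≤ √n ‖f‖_X |b v|`; testing it at `v = a (a ∫_E f)` and using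
that `a` is self-adjoint yields `|a ∫_E f| ≤ √n ‖b a‖ ‖f‖_X`, hence
`‖T_E f‖_X ≤ √n |a ⨍_E f| ≤ n μ(E)⁻¹ ‖a b‖ ‖f‖_X`, as `‖b a‖ = ‖(a b)†‖ = ‖a b‖`.

Conversely `|b a y| ≤ ‖1_E (a y)‖_{X'}`, a supremum of `∫_E |⟪g, a y⟫|` over the unit ball of `X`.
Multiplying `g` by a unimodular function, which the ideal property allows, turns this integral
into `⟪a y, ∫_E g⟫ = ⟪y, a ∫_E g⟫`, which is at most `|y| |a ∫_E g| ≤ |y| μ(E) ‖T_E g‖_X` by the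
lower bound `|a u| ≤ ‖1_E u‖_X`. Hence `‖b a‖ ≤ μ(E) ‖T_E‖`.
-/

open scoped NNReal

theorem ENNReal.le_mul_of_forall_coe_mul_le {I x d : ℝ≥0∞} (hx : x ≠ ⊤) (hd : d ≠ ⊤)
    (h : ∀ r : ℝ≥0, (r : ℝ≥0∞) * x ≤ 1 → (r : ℝ≥0∞) * I ≤ d) : I ≤ x * d := by
  rcases eq_or_ne x 0 with rfl | hx0
  · by_contra! hI
    rw [zero_mul] at hI
    obtain ⟨k, hk⟩ := ENNReal.exists_nat_gt (ENNReal.div_lt_top hd hI.ne').ne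
    have hkI : (k : ℝ≥0∞) * I ≤ d := by exact_mod_cast h k (by simp)
    exact (ENNReal.le_div_iff_mul_le (.inl hI.ne') (.inr hd) |>.mpr hkI).not_gt hk
  · have hr : ((x⁻¹.toNNReal : ℝ≥0) : ℝ≥0∞) = x⁻¹ :=
      ENNReal.coe_toNNReal (ENNReal.inv_ne_top.mpr hx0)
    have := h x⁻¹.toNNReal (by rw [hr, ENNReal.inv_mul_cancel hx0 hx])
    rw [hr] at this
    exact (ENNReal.inv_mul_le_iff hx0 hx).mp this

theorem ContinuousLinearMap.enorm_mul_comm_of_isSelfAdjoint {𝕜 E : Type*} [RCLike 𝕜]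
    [NormedAddCommGroup E] [InnerProductSpace 𝕜 E] [CompleteSpace E] {a b : E →L[𝕜] E}
    (ha : IsSelfAdjoint a) (hb : IsSelfAdjoint b) : ‖b * a‖ₑ = ‖a * b‖ₑ := by
  have h : b * a = adjoint (a * b) := by rw [← star_eq_adjoint, star_mul, ha.star_eq, hb.star_eq]
  rw [h, enorm_eq_nnnorm, enorm_eq_nnnorm, LinearIsometryEquiv.nnnorm_map]

theorem ContinuousLinearMap.enorm_apply_le_of_forall_enorm_inner_le {𝕜 E : Type*} [RCLike 𝕜]
    [NormedAddCommGroup E] [InnerProductSpace 𝕜 E] [CompleteSpace E] {a b : E →L[𝕜] E}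
    (ha : IsSelfAdjoint a) {u : E} {t : ℝ≥0∞} (h : ∀ v, ‖(inner 𝕜 v u : 𝕜)‖ₑ ≤ t * ‖b v‖ₑ) :
    ‖a u‖ₑ ≤ t * ‖b * a‖ₑ := by
  set w := a u
  rcases eq_or_ne w 0 with hw | hw
  · simp [hw]
  have hsq : ‖w‖ₑ * ‖w‖ₑ ≤ t * ‖b * a‖ₑ * ‖w‖ₑ :=
    calc ‖w‖ₑ * ‖w‖ₑ = ‖(inner 𝕜 (a w) u : 𝕜)‖ₑ := by
          rw [show (inner 𝕜 (a w) u : 𝕜) = inner 𝕜 w (a u) from ha.isSymmetric w u]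
          simp [w, inner_self_eq_norm_sq_to_K, enorm_eq_nnnorm, sq]
      _ ≤ t * ‖(b * a) w‖ₑ := h (a w)
      _ ≤ t * (‖b * a‖ₑ * ‖w‖ₑ) := by gcongr; exact (b * a).le_opENorm w
      _ = t * ‖b * a‖ₑ * ‖w‖ₑ := (mul_assoc _ _ _).symm
  exact (ENNReal.mul_le_mul_iff_left (enorm_ne_zero.mpr hw) enorm_ne_top).mp hsq

theorem exists_measurable_mul_eq_norm {𝕜 : Type*} [RCLike 𝕜] {Ω : Type*} [MeasurableSpace Ω]
    {z : Ω → 𝕜} (hz : Measurable z) :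
    ∃ h : Ω → 𝕜, Measurable h ∧ (∀ x, ‖h x‖ ≤ 1) ∧ ∀ x, h x * z x = ‖z x‖ := by
  refine ⟨fun x => starRingEnd 𝕜 (z x) / ‖z x‖,
    (RCLike.continuous_conj.measurable.comp hz).div (by fun_prop), fun x => ?_, fun x => ?_⟩
  · rcases eq_or_ne (z x) 0 with hx | hx
    · simp [hx]
    · simp [norm_div, hx]
  · rcases eq_or_ne (z x) 0 with hx | hx
    · simp [hx]
    · rw [div_mul_eq_mul_div, RCLike.conj_mul, sq, mul_self_div_self]

theorem MeasureTheory.enorm_inv_measureReal {Ω : Type*} [MeasurableSpace Ω] {μ : Measure Ω}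
    {E : Set Ω} (h0 : μ E ≠ 0) (htop : μ E ≠ ⊤) : ‖(μ.real E)⁻¹‖ₑ = (μ E)⁻¹ := by
  rw [Real.enorm_of_nonneg (by positivity), measureReal_def,
    ENNReal.ofReal_inv_of_pos (ENNReal.toReal_pos h0 htop), ENNReal.ofReal_toReal htop]

section DirDualNorm

variable {𝕜 : Type*} [RCLike 𝕜] {n : ℕ} {Ω : Type*} [MeasurableSpace Ω] {μ : Measure Ω}
  {E : Set Ω}

theorem ContinuousLinearMap.enorm_apply_setAverage (h0 : μ E ≠ 0) (htop : μ E ≠ ⊤)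
    (a : EuclideanSpace 𝕜 (Fin n) →L[𝕜] EuclideanSpace 𝕜 (Fin n))
    (f : Ω → EuclideanSpace 𝕜 (Fin n)) :
    ‖a (⨍ x in E, f x ∂μ)‖ₑ = (μ E)⁻¹ * ‖a (∫ x in E, f x ∂μ)‖ₑ := by
  rw [setAverage_eq, a.map_smul_of_tower, enorm_smul, enorm_inv_measureReal h0 htop]

theorem lintegral_enorm_inner_indicator_const (hE : MeasurableSet E)
    (f : Ω → EuclideanSpace 𝕜 (Fin n)) (v : EuclideanSpace 𝕜 (Fin n)) :
    ∫⁻ x, ‖(inner 𝕜 (f x) (E.indicator (fun _ => v) x) : 𝕜)‖ₑ ∂μ =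
      ∫⁻ x in E, ‖(inner 𝕜 v (f x) : 𝕜)‖ₑ ∂μ := by
  rw [← lintegral_indicator hE]
  congr 1 with x
  by_cases hx : x ∈ E
  · simp only [hx, Set.indicator_of_mem]
    rw [← inner_conj_symm, RCLike.enorm_conj]
  · simp [hx]

variable [MeasurableSpace (EuclideanSpace 𝕜 (Fin n))] {eN : (Ω → EuclideanSpace 𝕜 (Fin n)) → ℝ≥0∞}

theorem lintegral_enorm_inner_le_dirDualNorm {f : Ω → EuclideanSpace 𝕜 (Fin n)}
    (hf : Measurable f) (hf1 : eN f ≤ 1) (g : Ω → EuclideanSpace 𝕜 (Fin n)) :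
    ∫⁻ x, ‖(inner 𝕜 (f x) (g x) : 𝕜)‖ₑ ∂μ ≤ dirDualNorm μ eN g := by
  unfold dirDualNorm
  exact le_iSup₂_of_le f ⟨hf, hf1⟩ le_rfl

variable [BorelSpace (EuclideanSpace 𝕜 (Fin n))]

theorem lintegral_enorm_inner_le_mul_dirDualNorm
    (hHom : ∀ (a : 𝕜) (f : Ω → EuclideanSpace 𝕜 (Fin n)), eN (fun x => a • f x) = ‖a‖₊ * eN f)
    {f : Ω → EuclideanSpace 𝕜 (Fin n)} (hf : Measurable f) (hf_top : eN f ≠ ⊤)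
    {g : Ω → EuclideanSpace 𝕜 (Fin n)} (hg_top : dirDualNorm μ eN g ≠ ⊤) :
    ∫⁻ x, ‖(inner 𝕜 (f x) (g x) : 𝕜)‖ₑ ∂μ ≤ eN f * dirDualNorm μ eN g := by
  refine ENNReal.le_mul_of_forall_coe_mul_le hf_top hg_top fun r hr => ?_
  have hr' : ‖((r : ℝ) : 𝕜)‖₊ = r := by ext; simp
  have hrf : eN (fun x => ((r : ℝ) : 𝕜) • f x) ≤ 1 := by rwa [hHom, hr']
  calc (r : ℝ≥0∞) * ∫⁻ x, ‖(inner 𝕜 (f x) (g x) : 𝕜)‖ₑ ∂μ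
      = ∫⁻ x, ‖(inner 𝕜 (((r : ℝ) : 𝕜) • f x) (g x) : 𝕜)‖ₑ ∂μ := by
        rw [← lintegral_const_mul' _ _ ENNReal.coe_ne_top]
        congr 1 with x
        rw [inner_smul_left, enorm_mul, RCLike.enorm_conj, enorm_eq_nnnorm ((r : ℝ) : 𝕜), hr']
    _ ≤ dirDualNorm μ eN g :=
        lintegral_enorm_inner_le_dirDualNorm ((measurable_const_smul _).comp hf) hrf g

theorem integrableOn_of_dirDualNorm_indicator_ne_top
    (hHom : ∀ (a : 𝕜) (f : Ω → EuclideanSpace 𝕜 (Fin n)), eN (fun x => a • f x) = ‖a‖₊ * eN f)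
    (hE : MeasurableSet E) (hX' : ∀ u, dirDualNorm μ eN (E.indicator fun _ => u) ≠ ⊤)
    {f : Ω → EuclideanSpace 𝕜 (Fin n)} (hf : Measurable f) (hf_top : eN f ≠ ⊤) :
    IntegrableOn f E μ := by
  refine integrable_piLp_iff.mpr fun i =>
    ⟨((PiLp.proj 2 (𝕜 := 𝕜) _ i).continuous.measurable.comp hf).aestronglyMeasurable, ?_⟩
  let e : EuclideanSpace 𝕜 (Fin n) := EuclideanSpace.single i 1
  calc ∫⁻ x in E, ‖f x i‖ₑ ∂μ = ∫⁻ x in E, ‖(inner 𝕜 e (f x) : 𝕜)‖ₑ ∂μ := by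
        simp [e, EuclideanSpace.inner_single_left]
    _ = ∫⁻ x, ‖(inner 𝕜 (f x) (E.indicator (fun _ => e) x) : 𝕜)‖ₑ ∂μ :=
        (lintegral_enorm_inner_indicator_const hE f e).symm
    _ ≤ eN f * dirDualNorm μ eN (E.indicator fun _ => e) :=
        lintegral_enorm_inner_le_mul_dirDualNorm hHom hf hf_top (hX' e)
    _ < ⊤ := ENNReal.mul_lt_top hf_top.lt_top (hX' e).lt_top

theorem enorm_inner_setIntegral_le
    (hHom : ∀ (a : 𝕜) (f : Ω → EuclideanSpace 𝕜 (Fin n)), eN (fun x => a • f x) = ‖a‖₊ * eN f)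
    (hE : MeasurableSet E) {f : Ω → EuclideanSpace 𝕜 (Fin n)} (hf : Measurable f)
    {v : EuclideanSpace 𝕜 (Fin n)} (hv_top : dirDualNorm μ eN (E.indicator fun _ => v) ≠ ⊤)
    (hv_pos : v ≠ 0 → dirDualNorm μ eN (E.indicator fun _ => v) ≠ 0) :
    ‖(inner 𝕜 v (∫ x in E, f x ∂μ) : 𝕜)‖ₑ ≤ eN f * dirDualNorm μ eN (E.indicator fun _ => v) := by
  by_cases hint : IntegrableOn f E μ
  swap
  · simp [integral_undef hint]
  rcases eq_or_ne v 0 with rfl | hv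
  · simp
  rcases eq_or_ne (eN f) ⊤ with htop | htop
  · simp [htop, ENNReal.top_mul (hv_pos hv)]
  calc ‖(inner 𝕜 v (∫ x in E, f x ∂μ) : 𝕜)‖ₑ = ‖∫ x in E, (inner 𝕜 v (f x) : 𝕜) ∂μ‖ₑ := by
        rw [integral_inner hint]
    _ ≤ ∫⁻ x in E, ‖(inner 𝕜 v (f x) : 𝕜)‖ₑ ∂μ := enorm_integral_le_lintegral_enorm _
    _ = ∫⁻ x, ‖(inner 𝕜 (f x) (E.indicator (fun _ => v) x) : 𝕜)‖ₑ ∂μ :=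
        (lintegral_enorm_inner_indicator_const hE f v).symm
    _ ≤ eN f * dirDualNorm μ eN (E.indicator fun _ => v) :=
        lintegral_enorm_inner_le_mul_dirDualNorm hHom hf htop hv_top

theorem dirDualNorm_indicator_le_of_forall_enorm_inner_setIntegral_le
    (hIdeal : ∀ (h : Ω → 𝕜) (f : Ω → EuclideanSpace 𝕜 (Fin n)),
      Measurable h → (∀ x, ‖h x‖ ≤ 1) → eN (fun x => h x • f x) ≤ eN f)
    (hHom : ∀ (a : 𝕜) (f : Ω → EuclideanSpace 𝕜 (Fin n)), eN (fun x => a • f x) = ‖a‖₊ * eN f)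
    (hE : MeasurableSet E) (hX' : ∀ u, dirDualNorm μ eN (E.indicator fun _ => u) ≠ ⊤)
    (v : EuclideanSpace 𝕜 (Fin n)) {C : ℝ≥0∞}
    (hC : ∀ f, Measurable f → eN f ≤ 1 → ‖(inner 𝕜 v (∫ x in E, f x ∂μ) : 𝕜)‖ₑ ≤ C) :
    dirDualNorm μ eN (E.indicator fun _ => v) ≤ C := by
  refine iSup₂_le fun g ⟨hg, hg1⟩ => ?_
  obtain ⟨h, hh, hh1, hhz⟩ :=
    exists_measurable_mul_eq_norm (z := fun x => (inner 𝕜 v (g x) : 𝕜)) (by fun_prop)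
  have hhg : eN (fun x => h x • g x) ≤ 1 := (hIdeal h g hh hh1).trans hg1
  have hg_int : IntegrableOn g E μ := integrableOn_of_dirDualNorm_indicator_ne_top hHom hE hX' hg
    (ne_top_of_le_ne_top one_ne_top hg1)
  have hhg_int : IntegrableOn (fun x => h x • g x) E μ :=
    integrableOn_of_dirDualNorm_indicator_ne_top hHom hE hX' (hh.smul hg)
      (ne_top_of_le_ne_top one_ne_top hhg)
  calc ∫⁻ x, ‖(inner 𝕜 (g x) (E.indicator (fun _ => v) x) : 𝕜)‖ₑ ∂μ
      = ∫⁻ x in E, ‖(inner 𝕜 v (g x) : 𝕜)‖ₑ ∂μ := lintegral_enorm_inner_indicator_const hE g v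
    _ = ‖∫ x in E, ‖(inner 𝕜 v (g x) : 𝕜)‖ ∂μ‖ₑ := by
        rw [Real.enorm_of_nonneg (by positivity),
          ofReal_integral_norm_eq_lintegral_enorm (hg_int.const_inner v)]
    _ = ‖(inner 𝕜 v (∫ x in E, h x • g x ∂μ) : 𝕜)‖ₑ := by
        simp_rw [← integral_inner hhg_int, inner_smul_right, hhz, integral_ofReal]
        simp [enorm_eq_nnnorm]
    _ ≤ C := hC _ (hh.smul hg) hhg

variable {a b : EuclideanSpace 𝕜 (Fin n) →L[𝕜] EuclideanSpace 𝕜 (Fin n)}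

theorem eN_avgOp_le
    (hHom : ∀ (a : 𝕜) (f : Ω → EuclideanSpace 𝕜 (Fin n)), eN (fun x => a • f x) = ‖a‖₊ * eN f)
    (hE : MeasurableSet E) (h0 : μ E ≠ 0) (htop : μ E ≠ ⊤)
    (hX' : ∀ u, dirDualNorm μ eN (E.indicator fun _ => u) ≠ ⊤)
    (ha : IsSelfAdjoint a) (hb : IsSelfAdjoint b) (hb_inj : Function.Injective b) {α β : ℝ≥0∞}
    (hA : ∀ u, eN (E.indicator fun _ => u) ≤ α * ‖a u‖ₑ)
    (hB_le : ∀ u, ‖b u‖ₑ ≤ dirDualNorm μ eN (E.indicator fun _ => u))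
    (hB : ∀ u, dirDualNorm μ eN (E.indicator fun _ => u) ≤ β * ‖b u‖ₑ)
    {f : Ω → EuclideanSpace 𝕜 (Fin n)} (hf : Measurable f) :
    eN (avgOp μ E f) ≤ α * β * ((μ E)⁻¹ * ‖a * b‖ₑ) * eN f := by
  have hdual (v : EuclideanSpace 𝕜 (Fin n)) :
      ‖(inner 𝕜 v (∫ x in E, f x ∂μ) : 𝕜)‖ₑ ≤ eN f * β * ‖b v‖ₑ := by
    refine (enorm_inner_setIntegral_le hHom hE hf (hX' v) fun hv => ?_).trans ?_
    · exact ((enorm_pos.mpr ((map_ne_zero_iff b hb_inj).mpr hv)).trans_le (hB_le v)).ne'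
    · rw [mul_assoc]
      gcongr
      exact hB v
  calc eN (avgOp μ E f) ≤ α * ‖a (⨍ x in E, f x ∂μ)‖ₑ := hA _
    _ = α * ((μ E)⁻¹ * ‖a (∫ x in E, f x ∂μ)‖ₑ) := by rw [a.enorm_apply_setAverage h0 htop]
    _ ≤ α * ((μ E)⁻¹ * (eN f * β * ‖b * a‖ₑ)) := by
        gcongr
        exact a.enorm_apply_le_of_forall_enorm_inner_le ha hdual
    _ = α * β * ((μ E)⁻¹ * ‖a * b‖ₑ) * eN f := by
        rw [ContinuousLinearMap.enorm_mul_comm_of_isSelfAdjoint ha hb]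
        ring

theorem inv_measure_mul_enorm_le_of_eN_avgOp_le
    (hIdeal : ∀ (h : Ω → 𝕜) (f : Ω → EuclideanSpace 𝕜 (Fin n)),
      Measurable h → (∀ x, ‖h x‖ ≤ 1) → eN (fun x => h x • f x) ≤ eN f)
    (hHom : ∀ (a : 𝕜) (f : Ω → EuclideanSpace 𝕜 (Fin n)), eN (fun x => a • f x) = ‖a‖₊ * eN f)
    (hE : MeasurableSet E) (h0 : μ E ≠ 0) (htop : μ E ≠ ⊤)
    (hX' : ∀ u, dirDualNorm μ eN (E.indicator fun _ => u) ≠ ⊤)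
    (ha : IsSelfAdjoint a) (hb : IsSelfAdjoint b)
    (hA : ∀ u, ‖a u‖ₑ ≤ eN (E.indicator fun _ => u))
    (hB : ∀ u, ‖b u‖ₑ ≤ dirDualNorm μ eN (E.indicator fun _ => u)) {M : ℝ≥0∞}
    (hM : ∀ f, Measurable f → eN (avgOp μ E f) ≤ M * eN f) :
    (μ E)⁻¹ * ‖a * b‖ₑ ≤ M := by
  have hba : ‖b * a‖ₑ ≤ μ E * M := by
    refine (b * a).opENorm_le_bound fun y => (hB (a y)).trans ?_
    refine dirDualNorm_indicator_le_of_forall_enorm_inner_setIntegral_le hIdeal hHom hE hX' _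
      fun f hf hf1 => ?_
    calc ‖(inner 𝕜 (a y) (∫ x in E, f x ∂μ) : 𝕜)‖ₑ
        = ‖(inner 𝕜 y (a (∫ x in E, f x ∂μ)) : 𝕜)‖ₑ := by
          rw [show (inner 𝕜 (a y) (∫ x in E, f x ∂μ) : 𝕜) = inner 𝕜 y (a (∫ x in E, f x ∂μ)) from
            ha.isSymmetric y _]
      _ ≤ ‖y‖ₑ * ‖a (∫ x in E, f x ∂μ)‖ₑ := by
          simp only [enorm_eq_nnnorm]
          exact_mod_cast nnnorm_inner_le_nnnorm (𝕜 := 𝕜) y _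
      _ = ‖y‖ₑ * (μ E * ‖a (⨍ x in E, f x ∂μ)‖ₑ) := by
          rw [a.enorm_apply_setAverage h0 htop, ← mul_assoc (μ E), ENNReal.mul_inv_cancel h0 htop,
            one_mul]
      _ ≤ ‖y‖ₑ * (μ E * (M * 1)) := by
          gcongr
          calc ‖a (⨍ x in E, f x ∂μ)‖ₑ ≤ eN (avgOp μ E f) := hA _
            _ ≤ M * eN f := hM f hf
            _ ≤ M * 1 := by gcongr
      _ = μ E * M * ‖y‖ₑ := by ring
  calc (μ E)⁻¹ * ‖a * b‖ₑ = (μ E)⁻¹ * ‖b * a‖ₑ := by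
        rw [ContinuousLinearMap.enorm_mul_comm_of_isSelfAdjoint ha hb]
    _ ≤ (μ E)⁻¹ * (μ E * M) := by gcongr
    _ = M := by rw [← mul_assoc, ENNReal.inv_mul_cancel h0 htop, one_mul]

end DirDualNorm

/-- Let `X` be a Köthe reflexive `𝔽ⁿ`-directional Banach function space over
`Ω` and `E` a set of finite positive measure with `1_E u ∈ X, X'` for all `u ∈ 𝔽ⁿ`.  If
`A = A_{X,E}` and `B = A_{X',E}` are reducing matrices, i.e. Hermitian positive definite
matrices with `|A u| ≤ ‖1_E u‖_X ≤ √n |A u|` and similarly for `X'`, then the operator norm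
`‖T_E‖_{X→X}` is comparable, up to constants depending only on `n`, to
`μ(E)⁻¹ ‖A B‖`, the operator norm of the product matrix. -/
theorem stmt13 (𝕜 : Type*) [RCLike 𝕜] (n : ℕ)
    [MeasurableSpace (EuclideanSpace 𝕜 (Fin n))] [BorelSpace (EuclideanSpace 𝕜 (Fin n))] :
    ∃ c C : ℝ≥0∞, 0 < c ∧ C ≠ ⊤ ∧
      ∀ (Ω : Type) (_ : MeasurableSpace Ω) (μ : Measure Ω)
        (eN : (Ω → EuclideanSpace 𝕜 (Fin n)) → ℝ≥0∞),
        SigmaFinite μ →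
        -- directional ideal property
        (∀ (h : Ω → 𝕜) (f : Ω → EuclideanSpace 𝕜 (Fin n)),
          Measurable h → (∀ x, ‖h x‖ ≤ 1) → eN (fun x => h x • f x) ≤ eN f) →
        -- homogeneity
        (∀ (a : 𝕜) (f : Ω → EuclideanSpace 𝕜 (Fin n)),
          eN (fun x => a • f x) = ‖a‖₊ * eN f) →
        -- triangle inequality (Banach, not just quasi-Banach)
        (∀ f g : Ω → EuclideanSpace 𝕜 (Fin n),
          eN (fun x => f x + g x) ≤ eN f + eN g) →
        -- Köthe reflexivity: X'' = X with equal norms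
        (∀ f : Ω → EuclideanSpace 𝕜 (Fin n), Measurable f →
          dirDualNorm μ (dirDualNorm μ eN) f = eN f) →
        ∀ E : Set Ω, MeasurableSet E → 0 < μ E → μ E ≠ ⊤ →
        -- `1_E u ∈ X` and `1_E u ∈ X'` for all `u`
        (∀ u : EuclideanSpace 𝕜 (Fin n), eN (E.indicator fun _ => u) ≠ ⊤) →
        (∀ u : EuclideanSpace 𝕜 (Fin n), dirDualNorm μ eN (E.indicator fun _ => u) ≠ ⊤) →
        ∀ A B : Matrix (Fin n) (Fin n) 𝕜, A.PosDef → B.PosDef →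
        -- `A` is a reducing matrix of `E` in `X`
        (∀ u : EuclideanSpace 𝕜 (Fin n),
          (‖Matrix.toEuclideanLin A u‖₊ : ℝ≥0∞) ≤ eN (E.indicator fun _ => u) ∧
          eN (E.indicator fun _ => u) ≤
            ENNReal.ofReal (Real.sqrt n) * (‖Matrix.toEuclideanLin A u‖₊ : ℝ≥0∞)) →
        -- `B` is a reducing matrix of `E` in `X'`
        (∀ u : EuclideanSpace 𝕜 (Fin n),
          (‖Matrix.toEuclideanLin B u‖₊ : ℝ≥0∞) ≤ dirDualNorm μ eN (E.indicator fun _ => u) ∧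
          dirDualNorm μ eN (E.indicator fun _ => u) ≤
            ENNReal.ofReal (Real.sqrt n) * (‖Matrix.toEuclideanLin B u‖₊ : ℝ≥0∞)) →
        c * ((μ E)⁻¹ * (‖Matrix.toEuclideanCLM (𝕜 := 𝕜) (A * B)‖₊ : ℝ≥0∞)) ≤
            sInf {M : ℝ≥0∞ | ∀ f : Ω → EuclideanSpace 𝕜 (Fin n), Measurable f →
              eN (avgOp μ E f) ≤ M * eN f} ∧
          sInf {M : ℝ≥0∞ | ∀ f : Ω → EuclideanSpace 𝕜 (Fin n), Measurable f →
              eN (avgOp μ E f) ≤ M * eN f} ≤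
            C * ((μ E)⁻¹ * (‖Matrix.toEuclideanCLM (𝕜 := 𝕜) (A * B)‖₊ : ℝ≥0∞)) := by
  refine ⟨1, n, one_pos, ENNReal.natCast_ne_top n, ?_⟩
  intro Ω _ μ eN _ hIdeal hHom _ _ E hE hE0 hEtop _ hX' A B hA hB hAred hBred
  have ha : IsSelfAdjoint (Matrix.toEuclideanCLM (𝕜 := 𝕜) A) := hA.1.isSelfAdjoint.map _
  have hb : IsSelfAdjoint (Matrix.toEuclideanCLM (𝕜 := 𝕜) B) := hB.1.isSelfAdjoint.map _
  have hb_inj : Function.Injective (Matrix.toEuclideanCLM (𝕜 := 𝕜) B) := fun x y h =>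
    WithLp.ofLp_injective 2 (Matrix.mulVec_injective_of_isUnit hB.isUnit (congrArg WithLp.ofLp h))
  have hsqrt : ENNReal.ofReal √n * ENNReal.ofReal √n = n := by
    rw [← ENNReal.ofReal_mul (Real.sqrt_nonneg _), Real.mul_self_sqrt n.cast_nonneg,
      ENNReal.ofReal_natCast]
  rw [map_mul, one_mul]
  constructor
  · exact le_sInf fun M hM => inv_measure_mul_enorm_le_of_eN_avgOp_le hIdeal hHom hE hE0.ne' hEtop
      hX' ha hb (fun u => (hAred u).1) (fun u => (hBred u).1) hM
  · refine sInf_le fun f hf => ?_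
    rw [← hsqrt]
    exact eN_avgOp_le hHom hE hE0.ne' hEtop hX' ha hb hb_inj (fun u => (hAred u).2)
      (fun u => (hBred u).1) (fun u => (hBred u).2) hf
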